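/- arXiv:1512.06061 — 5 statements merged into one kernel-verified Lean document; each statement's English description precedes it below -/
import Mathlib

section
/- Let δ₂ be the orbit distance on the partition space P_{ℓ,m} induced by the Frobenius (l₂) norm, i.e., δ₂(X,Y) = min_{P ∈ Π} ‖X − PY‖₂ where Π is the group of ℓ×ℓ permutation matrices. Then for any two partitions X and Y there exists a midpoint partition M with δ₂(X, M) = δ₂(Y, M) = δ₂(X, Y)/2. -/
open Finset

/-- Frobenius (l₂) norm of an `ℓ×m` real matrix. -/
noncomputable def frobNorm {ℓ m : ℕ} (A : Matrix (Fin ℓ) (Fin m) ℝ) : ℝ :=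
  Real.sqrt (∑ i, ∑ j, (A i j) ^ 2)

/-- Row-permutation action (multiplication by a permutation matrix). -/
def permAct {ℓ m : ℕ} (σ : Equiv.Perm (Fin ℓ)) (X : Matrix (Fin ℓ) (Fin m) ℝ) :
    Matrix (Fin ℓ) (Fin m) ℝ := fun i j => X (σ i) j

/-- The orbit distance `δ₂(X,Y) = min_{P ∈ Π} ‖X − PY‖₂` induced by the Frobenius norm. -/
noncomputable def delta2 {ℓ m : ℕ} (X Y : Matrix (Fin ℓ) (Fin m) ℝ) : ℝ :=
  Finset.univ.inf' Finset.univ_nonempty (fun σ : Equiv.Perm (Fin ℓ) => frobNorm (X - permAct σ Y))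

/-! The midpoint is `(X + σY)/2` for an optimal alignment `σ`: it lies at distance `δ₂(X,Y)/2`
from both `X` and `σY`, so both orbit distances are at most `δ₂(X,Y)/2`, and the triangle
inequality for `δ₂` forces equality. It is again a partition because the partition matrices form
a convex set stable under row permutations. -/

open scoped Matrix.Norms.Frobenius

section Partitions

variable {ℓ m : ℕ}

def partitionMatrices (ℓ m : ℕ) : Set (Matrix (Fin ℓ) (Fin m) ℝ) :=
  {X | (∀ i j, X i j ∈ Set.Icc (0 : ℝ) 1) ∧ ∀ j, ∑ i, X i j = 1}

theorem convex_partitionMatrices : Convex ℝ (partitionMatrices ℓ m) := by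
  rintro X ⟨hX01, hXsum⟩ Y ⟨hY01, hYsum⟩ a b ha hb hab
  refine ⟨fun i j => convex_Icc 0 1 (hX01 i j) (hY01 i j) ha hb hab, fun j => ?_⟩
  simp only [Matrix.add_apply, Matrix.smul_apply, smul_eq_mul, sum_add_distrib, ← mul_sum,
    hXsum, hYsum, mul_one, hab]

theorem permAct_mem_partitionMatrices {X : Matrix (Fin ℓ) (Fin m) ℝ}
    (hX : X ∈ partitionMatrices ℓ m) (σ : Equiv.Perm (Fin ℓ)) :
    permAct σ X ∈ partitionMatrices ℓ m :=
  ⟨fun i j => hX.1 (σ i) j, fun j => (Equiv.sum_comp σ (X · j)).trans (hX.2 j)⟩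

end Partitions

section OrbitDistance

variable {ℓ m : ℕ}

theorem frobNorm_eq_norm (A : Matrix (Fin ℓ) (Fin m) ℝ) : frobNorm A = ‖A‖ := by
  simp only [frobNorm, Matrix.frobenius_norm_def, Real.norm_eq_abs, Real.rpow_two, sq_abs,
    Real.sqrt_eq_rpow]

theorem frobNorm_sub_eq_dist (A B : Matrix (Fin ℓ) (Fin m) ℝ) : frobNorm (A - B) = dist A B := by
  rw [frobNorm_eq_norm, dist_eq_norm]

@[simp]
theorem permAct_one (A : Matrix (Fin ℓ) (Fin m) ℝ) : permAct 1 A = A := rfl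

theorem permAct_permAct (σ τ : Equiv.Perm (Fin ℓ)) (A : Matrix (Fin ℓ) (Fin m) ℝ) :
    permAct σ (permAct τ A) = permAct (τ * σ) A := rfl

theorem frobNorm_permAct (σ : Equiv.Perm (Fin ℓ)) (A : Matrix (Fin ℓ) (Fin m) ℝ) :
    frobNorm (permAct σ A) = frobNorm A :=
  congrArg Real.sqrt (Equiv.sum_comp σ fun i => ∑ j, A i j ^ 2)

theorem dist_permAct_permAct (σ : Equiv.Perm (Fin ℓ)) (A B : Matrix (Fin ℓ) (Fin m) ℝ) :
    dist (permAct σ A) (permAct σ B) = dist A B := by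
  rw [← frobNorm_sub_eq_dist, ← frobNorm_sub_eq_dist, ← frobNorm_permAct σ (A - B)]
  rfl

theorem delta2_le_dist (X Y : Matrix (Fin ℓ) (Fin m) ℝ) (σ : Equiv.Perm (Fin ℓ)) :
    delta2 X Y ≤ dist X (permAct σ Y) :=
  frobNorm_sub_eq_dist X (permAct σ Y) ▸ inf'_le _ (mem_univ σ)

theorem exists_delta2_eq_dist (X Y : Matrix (Fin ℓ) (Fin m) ℝ) :
    ∃ σ : Equiv.Perm (Fin ℓ), delta2 X Y = dist X (permAct σ Y) := by
  obtain ⟨σ, -, hσ⟩ := exists_mem_eq_inf' univ_nonempty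
    fun σ : Equiv.Perm (Fin ℓ) => frobNorm (X - permAct σ Y)
  exact ⟨σ, hσ.trans (frobNorm_sub_eq_dist _ _)⟩

theorem delta2_comm (X Y : Matrix (Fin ℓ) (Fin m) ℝ) : delta2 X Y = delta2 Y X := by
  suffices h : ∀ X Y : Matrix (Fin ℓ) (Fin m) ℝ, delta2 X Y ≤ delta2 Y X from
    le_antisymm (h X Y) (h Y X)
  intro X Y
  refine le_inf' _ _ fun σ _ => ?_
  calc delta2 X Y ≤ dist X (permAct σ⁻¹ Y) := delta2_le_dist X Y σ⁻¹
    _ = dist Y (permAct σ X) := by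
      rw [← dist_permAct_permAct σ, permAct_permAct, inv_mul_cancel, permAct_one, dist_comm]
    _ = frobNorm (Y - permAct σ X) := (frobNorm_sub_eq_dist _ _).symm

theorem delta2_triangle (X Y Z : Matrix (Fin ℓ) (Fin m) ℝ) :
    delta2 X Z ≤ delta2 X Y + delta2 Y Z := by
  obtain ⟨σ, hσ⟩ := exists_delta2_eq_dist X Y
  obtain ⟨τ, hτ⟩ := exists_delta2_eq_dist Y Z
  calc delta2 X Z ≤ dist X (permAct (τ * σ) Z) := delta2_le_dist X Z _
    _ ≤ dist X (permAct σ Y) + dist (permAct σ Y) (permAct σ (permAct τ Z)) := dist_triangle _ _ _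
    _ = delta2 X Y + delta2 Y Z := by rw [dist_permAct_permAct, hσ, hτ]

end OrbitDistance

/-- in the partition space `(P_{ℓ,m}, δ₂)`, any two partitions `X` and `Y`
have a midpoint partition `M` with `δ₂(X,M) = δ₂(Y,M) = δ₂(X,Y)/2`. -/
theorem partition_space_has_midpoints {ℓ m : ℕ}
    (S : Set (Matrix (Fin ℓ) (Fin m) ℝ))
    (hS : S = {X | (∀ i j, X i j ∈ Set.Icc (0 : ℝ) 1) ∧ ∀ j, ∑ i, X i j = 1})
    (X Y : Matrix (Fin ℓ) (Fin m) ℝ) (hX : X ∈ S) (hY : Y ∈ S) :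
    ∃ M ∈ S, delta2 X M = delta2 X Y / 2 ∧ delta2 Y M = delta2 X Y / 2 := by
  change S = partitionMatrices ℓ m at hS
  subst hS
  obtain ⟨σ, hσ⟩ := exists_delta2_eq_dist X Y
  set M := midpoint ℝ X (permAct σ Y)
  have hM : M ∈ partitionMatrices ℓ m :=
    convex_partitionMatrices.midpoint_mem hX (permAct_mem_partitionMatrices hY σ)
  have hXM : delta2 X M ≤ delta2 X Y / 2 := by
    simpa [M, dist_left_midpoint, hσ, inv_mul_eq_div] using delta2_le_dist X M 1
  have hMY : delta2 M Y ≤ delta2 X Y / 2 := by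
    simpa [M, dist_midpoint_right, hσ, inv_mul_eq_div] using delta2_le_dist M Y σ
  have hXY : delta2 X Y ≤ delta2 X M + delta2 M Y := delta2_triangle X M Y
  refine ⟨M, hM, by linarith, ?_⟩
  rw [delta2_comm]
  linarith
end

section
/- If X and Y are hard partitions, then the generalized confusion matrix C(X,Y) computed from compatibility matrices via χ coincides with the classical pair-counting confusion matrix: m₁₁ counts unordered pairs {z_r, z_s} in the same cluster in both X and Y, m₁₀ counts pairs together in X but separated in Y, m₀₁ pairs separated in X but together in Y, and m₀₀ pairs separated in both. -/
open Matrix Finset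

/-- Inner product of the strictly upper triangular parts. -/
def chi {m : ℕ} (A B : Matrix (Fin m) (Fin m) ℝ) : ℝ :=
  ∑ r, ∑ s ∈ Finset.Ioi r, A r s * B r s

/-- The `m×m` all-ones matrix. -/
def onesMat (m : ℕ) : Matrix (Fin m) (Fin m) ℝ := fun _ _ => 1

/-- `r ∼_X s`: points `r` and `s` are in the same cluster of the hard partition `X`
(equal columns). -/
def sameCluster {ℓ m : ℕ} (X : Matrix (Fin ℓ) (Fin m) ℝ) (r s : Fin m) : Prop :=
  (fun i => X i r) = (fun i => X i s)

noncomputable instance {ℓ m : ℕ} (X : Matrix (Fin ℓ) (Fin m) ℝ) (r s : Fin m) :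
    Decidable (sameCluster X r s) := by unfold sameCluster; infer_instance

/-! For a hard partition every column of `X` is a standard basis vector, so the Gram matrix
`Xᵀ * X` is the 0/1 indicator of `∼_X` and `onesMat m - Xᵀ * X` that of its negation.
The sum `χ` of entrywise products of two such indicators over `r < s` then counts the pairs
satisfying both relations. -/

theorem exists_eq_pi_single_of_boolean_of_sum_eq_one {ι R : Type*} [Fintype ι] [DecidableEq ι]
    [AddCommMonoidWithOne R] [CharZero R] {v : ι → R}
    (hbin : ∀ i, v i = 0 ∨ v i = 1) (hsum : ∑ i, v i = 1) : ∃ i, v = Pi.single i 1 := by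
  classical
  have hv : v = fun k => if v k = 1 then 1 else 0 := by
    funext k; rcases hbin k with h | h <;> simp [h]
  have hcard : #{k | v k = 1} = 1 := by
    rw [hv, Finset.sum_boole] at hsum
    exact_mod_cast hsum
  obtain ⟨i, hi⟩ := Finset.card_eq_one.mp hcard
  refine ⟨i, funext fun k => ?_⟩
  have hk : v k = 1 ↔ k = i := by simpa using Finset.ext_iff.mp hi k
  rw [hv, Pi.single_apply]
  exact if_congr hk rfl rfl

theorem transpose_mul_self_eq_ite_sameCluster {ℓ m : ℕ} {X : Matrix (Fin ℓ) (Fin m) ℝ}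
    (hbin : ∀ i j, X i j = 0 ∨ X i j = 1) (hcol : ∀ j, ∑ i, X i j = 1) :
    Xᵀ * X = of fun r s => if sameCluster X r s then 1 else 0 := by
  ext r s
  obtain ⟨a, ha⟩ := exists_eq_pi_single_of_boolean_of_sum_eq_one (hbin · r) (hcol r)
  obtain ⟨b, hb⟩ := exists_eq_pi_single_of_boolean_of_sum_eq_one (hbin · s) (hcol s)
  have hsame : sameCluster X r s ↔ a = b := by
    rw [sameCluster, ha, hb]
    exact ⟨fun h => by simpa [Pi.single_apply] using congrFun h a, fun h => h ▸ rfl⟩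
  simp only [mul_apply, transpose_apply, of_apply, hsame]
  simp [congrFun ha, congrFun hb, Pi.single_apply, @eq_comm _ b]

theorem onesMat_sub_of_ite {m : ℕ} (P : Fin m → Fin m → Prop) [∀ r s, Decidable (P r s)] :
    onesMat m - of (fun r s => if P r s then 1 else 0) =
      of fun r s => if ¬ P r s then 1 else 0 := by
  ext r s
  by_cases h : P r s <;> simp [onesMat, h]

theorem chi_of_ite {m : ℕ} (P Q : Fin m → Fin m → Prop) [∀ r s, Decidable (P r s)]
    [∀ r s, Decidable (Q r s)] :
    chi (of fun r s => if P r s then 1 else 0) (of fun r s => if Q r s then 1 else 0) =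
      #{p : Fin m × Fin m | p.1 < p.2 ∧ P p.1 p.2 ∧ Q p.1 p.2} := by
  simp only [chi, of_apply, ← ite_and, boole_mul]
  rw [Finset.card_filter]
  push_cast
  rw [← Finset.univ_product_univ, Finset.sum_product]
  refine Finset.sum_congr rfl fun r _ => ?_
  rw [← Finset.filter_lt_eq_Ioi, Finset.sum_filter]
  simp only [ite_and]

/-- for hard partitions `X` and `Y`, the generalized confusion matrix
computed via `χ` from compatibility matrices coincides with the classical pair-counting
confusion matrix: `m₁₁` counts unordered pairs together in both, `m₁₀` pairs together
in `X` but separated in `Y`, `m₀₁` pairs separated in `X` but together in `Y`, and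
`m₀₀` pairs separated in both. -/
theorem confusion_matrix_extends_pair_counting {ℓ m : ℕ}
    (X Y : Matrix (Fin ℓ) (Fin m) ℝ)
    (hXbin : ∀ i j, X i j = 0 ∨ X i j = 1) (hXcol : ∀ j, ∑ i, X i j = 1)
    (hYbin : ∀ i j, Y i j = 0 ∨ Y i j = 1) (hYcol : ∀ j, ∑ i, Y i j = 1) :
    chi (Xᵀ * X) (Yᵀ * Y) =
      #{p : Fin m × Fin m | p.1 < p.2 ∧ sameCluster X p.1 p.2 ∧ sameCluster Y p.1 p.2} ∧
    chi (Xᵀ * X) (onesMat m - Yᵀ * Y) =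
      #{p : Fin m × Fin m | p.1 < p.2 ∧ sameCluster X p.1 p.2 ∧ ¬ sameCluster Y p.1 p.2} ∧
    chi (onesMat m - Xᵀ * X) (Yᵀ * Y) =
      #{p : Fin m × Fin m | p.1 < p.2 ∧ ¬ sameCluster X p.1 p.2 ∧ sameCluster Y p.1 p.2} ∧
    chi (onesMat m - Xᵀ * X) (onesMat m - Yᵀ * Y) =
      #{p : Fin m × Fin m | p.1 < p.2 ∧ ¬ sameCluster X p.1 p.2 ∧ ¬ sameCluster Y p.1 p.2} := by
  have hX := transpose_mul_self_eq_ite_sameCluster hXbin hXcol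
  have hY := transpose_mul_self_eq_ite_sameCluster hYbin hYcol
  simp only [hX, hY, onesMat_sub_of_ite, chi_of_ite, and_self]
end

section
/- Let (P, δ) be a compact metric space, h continuous nonnegative loss, and X₁, X₂, … i.i.d. P-valued random variables with law Q. Let V_n = inf_Z (1/n) Σ_{i=1}^n h(δ(X_i, Z)) and V_Q = inf_Z ∫ h(δ(X, Z)) dQ(X). Then V_n → V_Q almost surely. -/
/-!
By the strong law of large numbers, for each fixed centre `Z` the empirical Fréchet function
`F_n(Z)` converges almost surely to `F_Q(Z)`, hence almost surely simultaneously for all `Z` in a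
countable dense set. Since `h ∘ δ` is uniformly continuous on the compact space `P × P`, the
functions `F_n` are uniformly equicontinuous, so by Ascoli convergence on a dense set is uniform
convergence. Finally, the infimum is `1`-Lipschitz for the uniform distance.
-/

open MeasureTheory Filter Topology ProbabilityTheory Finset

section Infimum

variable {ι : Type*} [Nonempty ι] {f g : ι → ℝ}

theorem ciInf_le_ciInf_add {c : ℝ} (hf : BddBelow (Set.range f)) (hfg : ∀ i, f i ≤ g i + c) :
    ⨅ i, f i ≤ (⨅ i, g i) + c := by
  have : ∀ i, (⨅ i, f i) - c ≤ g i := fun i => by linarith [ciInf_le hf i, hfg i]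
  linarith [le_ciInf this]

theorem dist_ciInf_ciInf_le {c : ℝ} (hf : BddBelow (Set.range f)) (hg : BddBelow (Set.range g))
    (hfg : ∀ i, dist (f i) (g i) ≤ c) : dist (⨅ i, f i) (⨅ i, g i) ≤ c := by
  have hle : ∀ i, |f i - g i| ≤ c := fun i => by simpa [Real.dist_eq] using hfg i
  rw [Real.dist_eq, abs_sub_le_iff]
  constructor
  · linarith [ciInf_le_ciInf_add (g := g) (c := c) hf fun i => by linarith [abs_le.1 (hle i)]]
  · linarith [ciInf_le_ciInf_add (g := f) (c := c) hg fun i => by linarith [abs_le.1 (hle i)]]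

theorem TendstoUniformly.tendsto_ciInf {α : Type*} {l : Filter α} {F : α → ι → ℝ}
    (hF : ∀ a, BddBelow (Set.range (F a))) (hg : BddBelow (Set.range g))
    (hFg : TendstoUniformly F g l) : Tendsto (fun a => ⨅ i, F a i) l (𝓝 (⨅ i, g i)) := by
  refine Metric.tendsto_nhds.2 fun ε hε => ?_
  filter_upwards [Metric.tendstoUniformly_iff.1 hFg (ε / 2) (half_pos hε)] with a ha
  calc dist (⨅ i, F a i) (⨅ i, g i) ≤ ε / 2 :=
        dist_ciInf_ciInf_le (hF a) hg fun i => by rw [dist_comm]; exact (ha i).le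
    _ < ε := half_lt_self hε

end Infimum

theorem Equicontinuous.tendstoUniformly_of_dense {ι X α : Type*} [TopologicalSpace X]
    [CompactSpace X] [UniformSpace α] {l : Filter ι} {F : ι → X → α} {g : X → α} {D : Set X}
    (hF : Equicontinuous F) (hg : Continuous g) (hD : Dense D)
    (hFg : ∀ x ∈ D, Tendsto (F · x) l (𝓝 (g x))) : TendstoUniformly F g l := by
  have hpi : ∀ x, Tendsto (F · x) l (𝓝 (g x)) := by
    have := (hF.isClosed_setOfPred_tendsto (l := l) hg).closure_subset_iff.2 hFg
    rwa [hD.closure_eq, Set.univ_subset_iff, Set.eq_univ_iff_forall] at this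
  exact UniformFun.tendsto_iff_tendstoUniformly.1 <|
    (hF.tendsto_uniformFun_iff_pi l g).2 (tendsto_pi_nhds.2 hpi)

theorem uniformEquicontinuous_of_uniformContinuous_uncurry {S Y α : Type*}
    [PseudoMetricSpace S] [PseudoMetricSpace Y] [PseudoMetricSpace α] {g : S → Y → α}
    (hg : UniformContinuous (Function.uncurry g)) : UniformEquicontinuous g := by
  refine Metric.uniformEquicontinuous_iff.2 fun ε hε => ?_
  obtain ⟨δ, hδ, hgδ⟩ := Metric.uniformContinuous_iff.1 hg ε hε
  refine ⟨δ, hδ, fun y y' hyy' s => @hgδ (s, y) (s, y') ?_⟩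
  simpa [Prod.dist_eq] using hyy'

theorem UniformEquicontinuous.cesaro_mean {Y : Type*} [UniformSpace Y] {f : ℕ → Y → ℝ}
    (hf : UniformEquicontinuous f) :
    UniformEquicontinuous (fun (n : ℕ) y => (1 / (n : ℝ)) * ∑ i ∈ range n, f i y) := by
  refine Metric.uniformEquicontinuous_iff_right.2 fun ε hε => ?_
  filter_upwards [Metric.uniformEquicontinuous_iff_right.1 hf (ε / 2) (half_pos hε)]
    with p hp
  intro n
  have hsum : dist (∑ i ∈ range n, f i p.1) (∑ i ∈ range n, f i p.2) ≤ n * (ε / 2) := by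
    simpa using dist_sum_sum_le_of_le (range n) fun i _ => (hp i).le
  calc dist ((1 / (n : ℝ)) * ∑ i ∈ range n, f i p.1) ((1 / (n : ℝ)) * ∑ i ∈ range n, f i p.2)
      = (1 / (n : ℝ)) * dist (∑ i ∈ range n, f i p.1) (∑ i ∈ range n, f i p.2) := by
        rw [Real.dist_eq, Real.dist_eq, ← mul_sub, abs_mul, abs_of_nonneg (by positivity)]
    _ ≤ (1 / (n : ℝ)) * (n * (ε / 2)) := by gcongr
    _ ≤ ε / 2 := by
        rcases n.eq_zero_or_pos with rfl | hn
        · simpa using (half_pos hε).le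
        · rw [← mul_assoc, one_div_mul_cancel (by positivity), one_mul]
    _ < ε := half_lt_self hε

section StrongLaw

variable {Ω E : Type*} [MeasurableSpace Ω] {μ : Measure Ω} [MeasurableSpace E] {Q : Measure E}
  {X : ℕ → Ω → E}

theorem strong_law_ae_of_map_eq (hX : ∀ i, Measurable (X i)) (hindep : iIndepFun X μ)
    (hlaw : ∀ i, μ.map (X i) = Q) {φ : E → ℝ} (hφ : Measurable φ) (hφQ : Integrable φ Q) :
    ∀ᵐ ω ∂μ, Tendsto (fun n : ℕ => (1 / (n : ℝ)) * ∑ i ∈ range n, φ (X i ω)) atTop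
      (𝓝 (∫ x, φ x ∂Q)) := by
  have hident : ∀ i, IdentDistrib (fun ω => φ (X i ω)) (fun ω => φ (X 0 ω)) μ μ := fun i =>
    (IdentDistrib.mk (hX i).aemeasurable (hX 0).aemeasurable (by rw [hlaw i, hlaw 0])).comp hφ
  have hint : Integrable (fun ω => φ (X 0 ω)) μ := by
    rw [← hlaw 0] at hφQ
    exact hφQ.comp_measurable (hX 0)
  have hmean : ∫ ω, φ (X 0 ω) ∂μ = ∫ x, φ x ∂Q := by
    rw [← hlaw 0, integral_map (hX 0).aemeasurable hφ.aestronglyMeasurable]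
  filter_upwards [strong_law_ae_real (fun i ω => φ (X i ω)) hint
    (fun i j hij => (hindep.indepFun hij).comp hφ hφ) hident] with ω hω
  simpa only [one_div_mul_eq_div, hmean] using hω

variable [PseudoMetricSpace E] [CompactSpace E] [OpensMeasurableSpace E] [IsFiniteMeasure Q]
  {Y : Type*} [PseudoMetricSpace Y] [CompactSpace Y] {g : E → Y → ℝ}

theorem continuous_integral_of_continuous_uncurry (hg : Continuous (Function.uncurry g)) :
    Continuous fun y => ∫ x, g x y ∂Q := by
  simpa using continuous_parametric_integral_of_continuous (μ := Q) (f := fun y x => g x y)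
    (hg.comp continuous_swap) isCompact_univ

theorem strong_law_ae_tendstoUniformly (hX : ∀ i, Measurable (X i)) (hindep : iIndepFun X μ)
    (hlaw : ∀ i, μ.map (X i) = Q) (hg : Continuous (Function.uncurry g)) :
    ∀ᵐ ω ∂μ, TendstoUniformly (fun (n : ℕ) y => (1 / (n : ℝ)) * ∑ i ∈ range n, g (X i ω) y)
      (fun y => ∫ x, g x y ∂Q) atTop := by
  have hgy : ∀ y, Continuous (g · y) := fun y => by fun_prop
  obtain ⟨D, hDc, hD⟩ := TopologicalSpace.exists_countable_dense Y
  have hD_ae : ∀ᵐ ω ∂μ, ∀ y ∈ D, Tendsto (fun n : ℕ => (1 / (n : ℝ)) * ∑ i ∈ range n, g (X i ω) y)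
      atTop (𝓝 (∫ x, g x y ∂Q)) := (ae_ball_iff hDc).2 fun y _ =>
    strong_law_ae_of_map_eq hX hindep hlaw (hgy y).measurable
      ((hgy y).integrable_of_hasCompactSupport (HasCompactSupport.of_compactSpace _))
  have hequi : UniformEquicontinuous g := uniformEquicontinuous_of_uniformContinuous_uncurry
    (CompactSpace.uniformContinuous_of_continuous hg)
  filter_upwards [hD_ae] with ω hω
  exact (hequi.comp (X · ω)).cesaro_mean.equicontinuous.tendstoUniformly_of_dense
    (continuous_integral_of_continuous_uncurry hg) hD hω

end StrongLaw

theorem empirical_variation_strongly_consistent_general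
    (P : Type*) [MetricSpace P] [CompactSpace P] [Nonempty P]
    [MeasurableSpace P] [BorelSpace P]
    (h : ℝ → ℝ) (hh : Continuous h)
    (Q : Measure P) [IsProbabilityMeasure Q]
    (Ω : Type*) [MeasurableSpace Ω] (μ : Measure Ω)
    (X : ℕ → Ω → P) (hmeas : ∀ i, Measurable (X i))
    (hindep : ProbabilityTheory.iIndepFun X μ)
    (hlaw : ∀ i, μ.map (X i) = Q) :
    ∀ᵐ ω ∂μ,
      Tendsto
        (fun n : ℕ => ⨅ Z : P, (1 / (n : ℝ)) * ∑ i ∈ Finset.range n, h (dist (X i ω) Z))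
        atTop
        (nhds (⨅ Z : P, ∫ x, h (dist x Z) ∂Q)) := by
  have hloss : Continuous (Function.uncurry fun x Z : P => h (dist x Z)) := hh.comp continuous_dist
  filter_upwards [strong_law_ae_tendstoUniformly hmeas hindep hlaw hloss] with ω hω
  refine hω.tendsto_ciInf (fun n => (isCompact_range ?_).bddBelow)
    (isCompact_range (continuous_integral_of_continuous_uncurry hloss)).bddBelow
  fun_prop

/-- let `(P, δ)` be a compact metric space, `h` a continuous nonnegative
loss, and `X₁, X₂, …` i.i.d. `P`-valued random variables with law `Q`. With
`V_n = inf_Z (1/n) Σ_{i<n} h(δ(X_i,Z))` and `V_Q = inf_Z ∫ h(δ(X,Z)) dQ(X)`, we have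
`V_n → V_Q` almost surely. -/
theorem empirical_variation_strongly_consistent
    (P : Type*) [MetricSpace P] [CompactSpace P] [Nonempty P]
    [MeasurableSpace P] [BorelSpace P]
    (h : ℝ → ℝ) (hh : Continuous h) (hh0 : ∀ x, 0 ≤ x → 0 ≤ h x)
    (Q : Measure P) [IsProbabilityMeasure Q]
    (Ω : Type*) [MeasurableSpace Ω] (μ : Measure Ω) [IsProbabilityMeasure μ]
    (X : ℕ → Ω → P) (hmeas : ∀ i, Measurable (X i))
    (hindep : ProbabilityTheory.iIndepFun X μ)
    (hlaw : ∀ i, μ.map (X i) = Q) :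
    ∀ᵐ ω ∂μ,
      Tendsto
        (fun n : ℕ => ⨅ Z : P, (1 / (n : ℝ)) * ∑ i ∈ Finset.range n, h (dist (X i ω) Z))
        atTop
        (nhds (⨅ Z : P, ∫ x, h (dist x Z) ∂Q)) :=
  empirical_variation_strongly_consistent_general P h hh Q Ω μ X hmeas hindep hlaw
end

section
/- Let (P, δ) be a compact metric space, h a continuous nonnegative loss, Q a Borel probability measure on P, X₁, X₂, … i.i.d. with law Q. If the expected Fréchet function F_Q(Z) = ∫ h(δ(X,Z)) dQ(X) has a unique minimizer M, then any sequence M_n of minimizers of the empirical Fréchet functions F_n(Z) = (1/n)Σ h(δ(X_i, Z)) satisfies δ(M_n, M) → 0 almost surely. -/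
/-! The empirical Fréchet functions `F_n` form an equicontinuous family, because `h ∘ dist` is
uniformly continuous on the compact space `P × P`. The strong law gives `F_n → F_Q` almost surely
on a countable dense set of points simultaneously, and Ascoli's theorem upgrades this to uniform
convergence on `P`. Along a uniformly convergent sequence, every cluster point of the minimizers
`M_n` minimizes the continuous limit `F_Q`, so by compactness and uniqueness `M_n → M`. -/

open MeasureTheory Filter Topology Finset ProbabilityTheory

section Deterministic

variable {ι E P α : Type*}

theorem dist_sum_div_le_of_le {a b : ℕ → ℝ} {c : ℝ} (hc : 0 ≤ c)
    (hab : ∀ i, dist (a i) (b i) ≤ c) (n : ℕ) :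
    dist ((∑ i ∈ range n, a i) / n) ((∑ i ∈ range n, b i) / n) ≤ c := by
  rcases n.eq_zero_or_pos with rfl | hn
  · simpa using hc
  have hn' : (0 : ℝ) < n := Nat.cast_pos.2 hn
  rw [Real.dist_eq, ← sub_div, abs_div, abs_of_pos hn', div_le_iff₀ hn', ← sum_sub_distrib]
  calc |∑ i ∈ range n, (a i - b i)| ≤ ∑ i ∈ range n, |a i - b i| := abs_sum_le_sum_abs _ _
    _ ≤ ∑ _i ∈ range n, c := sum_le_sum fun i _ => hab i
    _ = c * n := by rw [sum_const, card_range, nsmul_eq_mul, mul_comm]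

theorem uniformEquicontinuous_of_uniformContinuous_uncurry_s16 [UniformSpace E] [UniformSpace P]
    [UniformSpace α] {f : E → P → α} (hf : UniformContinuous (Function.uncurry f)) :
    UniformEquicontinuous f := by
  intro U hU
  obtain ⟨t, ht, hsub⟩ := mem_comap.1 (uniformity_prod_eq_comap_prod (α := E) (β := P) ▸ hf hU)
  obtain ⟨A, hA, B, hB, hAB⟩ := mem_prod_iff.1 ht
  filter_upwards [hB] with q hq x
  exact @hsub ((x, q.1), (x, q.2)) (hAB ⟨refl_mem_uniformity hA, hq⟩)

theorem Equicontinuous.average [TopologicalSpace P] {f : E → P → ℝ} (hf : Equicontinuous f)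
    (x : ℕ → E) : Equicontinuous fun n z => (∑ i ∈ range n, f (x i) z) / n := by
  intro z₀
  rw [Metric.equicontinuousAt_iff_right]
  intro ε hε
  filter_upwards [Metric.equicontinuousAt_iff_right.1 (hf z₀) (ε / 2) (half_pos hε)] with z hz n
  exact (dist_sum_div_le_of_le (half_pos hε).le (fun i => (hz (x i)).le) n).trans_lt
    (half_lt_self hε)

theorem Equicontinuous.tendstoUniformly_of_tendsto_of_dense [TopologicalSpace P] [CompactSpace P]
    [UniformSpace α] {F : ι → P → α} {f : P → α} {l : Filter ι} {s : Set P}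
    (hF : Equicontinuous F) (hf : Continuous f) (hs : Dense s)
    (hlim : ∀ z ∈ s, Tendsto (F · z) l (𝓝 (f z))) : TendstoUniformly F f l := by
  have hall : ∀ z, Tendsto (F · z) l (𝓝 (f z)) := fun z =>
    (hF.isClosed_setOfPred_tendsto hf).closure_subset_iff.2 hlim (hs z)
  exact UniformFun.tendsto_iff_tendstoUniformly.1 <|
    (hF.tendsto_uniformFun_iff_pi l f).2 (tendsto_pi_nhds.2 hall)

theorem tendsto_minimizer_of_tendstoUniformly [TopologicalSpace P] [CompactSpace P]
    {F : ι → P → ℝ} {f : P → ℝ} {l : Filter ι} {m : ι → P} {z₀ : P} (hf : Continuous f)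
    (hF : TendstoUniformly F f l) (hm : ∀ i z, F i (m i) ≤ F i z)
    (huniq : ∀ z, (∀ y, f z ≤ f y) → z = z₀) : Tendsto m l (𝓝 z₀) := by
  refine tendsto_nhds_of_unique_mapClusterPt fun z hz => huniq z fun y => ?_
  refine le_of_forall_pos_le_add fun ε hε => ?_
  have hclose : ∀ᶠ i in l, ∀ x, dist (f x) (F i x) < ε / 2 :=
    Metric.tendstoUniformly_iff.1 hF (ε / 2) (half_pos hε)
  have hlt : ∀ᶠ i in l, m i ∈ {x | f x ≤ f y + ε} := by
    filter_upwards [hclose] with i hi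
    have h₁ := (abs_lt.1 (Real.dist_eq _ _ ▸ hi (m i))).2
    have h₂ := (abs_lt.1 (Real.dist_eq _ _ ▸ hi y)).1
    have h₃ := hm i y
    show f (m i) ≤ f y + ε
    linarith
  exact (isClosed_le hf continuous_const).mem_of_mapClusterPt hz hlt

end Deterministic

section Probability

variable {E P Ω : Type*} [MeasurableSpace E] [MeasurableSpace Ω] {μ : Measure Ω} {Q : Measure E}
  {X : ℕ → Ω → E}

theorem continuous_integral_of_equicontinuous [TopologicalSpace P] [IsFiniteMeasure Q]
    {f : E → P → ℝ} (hf : Equicontinuous f) (hint : ∀ z, Integrable (f · z) Q) :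
    Continuous fun z => ∫ x, f x z ∂Q := by
  refine continuous_iff_continuousAt.2 fun z₀ => Metric.tendsto_nhds.2 fun ε hε => ?_
  set c := ε / (Q.real Set.univ + 1)
  have hc : 0 < c := by positivity
  filter_upwards [Metric.equicontinuousAt_iff_right.1 (hf z₀) c hc] with z hz
  rw [dist_eq_norm, ← integral_sub (hint z) (hint z₀)]
  calc ‖∫ x, (f x z - f x z₀) ∂Q‖ ≤ c * Q.real Set.univ :=
        norm_integral_le_of_norm_le_const <| ae_of_all _ fun x => by
          rw [← dist_eq_norm, dist_comm]; exact (hz x).le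
    _ < c * (Q.real Set.univ + 1) := mul_lt_mul_of_pos_left (lt_add_one _) hc
    _ = ε := div_mul_cancel₀ _ (by positivity)

theorem ae_tendsto_average_comp (hX : ∀ i, Measurable (X i))
    (hindep : Pairwise fun i j => IndepFun (X i) (X j) μ) (hlaw : ∀ i, μ.map (X i) = Q) {g : E → ℝ}
    (hg : Measurable g) (hint : Integrable g Q) :
    ∀ᵐ ω ∂μ, Tendsto (fun n : ℕ => (∑ i ∈ range n, g (X i ω)) / n) atTop (𝓝 (∫ x, g x ∂Q)) := by
  have hident : ∀ i, IdentDistrib (X i) (X 0) μ μ := fun i =>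
    ⟨(hX i).aemeasurable, (hX 0).aemeasurable, by rw [hlaw i, hlaw 0]⟩
  rw [← hlaw 0, integral_map (hX 0).aemeasurable hg.aestronglyMeasurable]
  refine strong_law_ae_real (fun i ω => g (X i ω)) ?_ (fun i j hij => (hindep hij).comp hg hg)
    fun i => (hident i).comp hg
  exact (integrable_map_measure hg.aestronglyMeasurable (hX 0).aemeasurable).1
    (hlaw 0 ▸ hint)

theorem ae_tendstoUniformly_average_comp [TopologicalSpace P] [CompactSpace P]
    [TopologicalSpace.SeparableSpace P] [IsFiniteMeasure Q] (hX : ∀ i, Measurable (X i))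
    (hindep : Pairwise fun i j => IndepFun (X i) (X j) μ) (hlaw : ∀ i, μ.map (X i) = Q)
    {f : E → P → ℝ} (hf : Equicontinuous f) (hmeas : ∀ z, Measurable (f · z))
    (hint : ∀ z, Integrable (f · z) Q) :
    ∀ᵐ ω ∂μ, TendstoUniformly (fun n z => (∑ i ∈ range n, f (X i ω) z) / n)
      (fun z => ∫ x, f x z ∂Q) atTop := by
  obtain ⟨s, hs_count, hs_dense⟩ := TopologicalSpace.exists_countable_dense P
  have hlim := (ae_ball_iff hs_count).2 fun z _ =>
    ae_tendsto_average_comp hX hindep hlaw (hmeas z) (hint z)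
  filter_upwards [hlim] with ω hω
  exact (hf.average _).tendstoUniformly_of_tendsto_of_dense
    (continuous_integral_of_equicontinuous hf hint) hs_dense hω

end Probability

theorem frechet_mean_strongly_consistent_unique_case_general
    (P : Type*) [MetricSpace P] [CompactSpace P]
    [MeasurableSpace P] [BorelSpace P]
    (h : ℝ → ℝ) (hh : Continuous h)
    (Q : Measure P) [IsProbabilityMeasure Q]
    (Ω : Type*) [MeasurableSpace Ω] (μ : Measure Ω)
    (X : ℕ → Ω → P) (hmeas : ∀ i, Measurable (X i))
    (hindep : ProbabilityTheory.iIndepFun X μ)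
    (hlaw : ∀ i, μ.map (X i) = Q)
    (M : P)
    (hMuniq : ∀ M' : P, (∀ Z : P, (∫ x, h (dist x M') ∂Q) ≤ ∫ x, h (dist x Z) ∂Q) → M' = M)
    (Mn : ℕ → Ω → P)
    (hMn : ∀ n ω, ∀ Z : P,
      (∑ i ∈ Finset.range n, h (dist (X i ω) (Mn n ω))) / n
        ≤ (∑ i ∈ Finset.range n, h (dist (X i ω) Z)) / n) :
    ∀ᵐ ω ∂μ, Tendsto (fun n : ℕ => dist (Mn n ω) M) atTop (nhds 0) := by
  have hcont : Continuous fun p : P × P => h (dist p.1 p.2) := hh.comp continuous_dist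
  have hequi : Equicontinuous fun x z : P => h (dist x z) :=
    (uniformEquicontinuous_of_uniformContinuous_uncurry_s16
      (CompactSpace.uniformContinuous_of_continuous hcont)).equicontinuous
  have hcont_left (z : P) : Continuous fun x => h (dist x z) := hcont.comp (.prodMk_left z)
  have hint (z : P) : Integrable (fun x => h (dist x z)) Q :=
    (hcont_left z).integrable_of_hasCompactSupport (.of_compactSpace _)
  filter_upwards [ae_tendstoUniformly_average_comp hmeas (fun i j hij => hindep.indepFun hij) hlaw
    hequi (fun z => (hcont_left z).measurable) hint] with ω hω
  exact tendsto_iff_dist_tendsto_zero.1 <| tendsto_minimizer_of_tendstoUniformly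
    (continuous_integral_of_equicontinuous hequi hint) hω (hMn · ω) hMuniq

/-- let `(P, δ)` be a compact metric space, `h` a continuous nonnegative
loss, `Q` a Borel probability measure, and `X₁, X₂, …` i.i.d. with law `Q`. If the
expected Fréchet function `F_Q(Z) = ∫ h(δ(X,Z)) dQ(X)` has a unique minimizer `M`,
then any sequence `M_n` of minimizers of the empirical Fréchet functions
`F_n(Z) = (1/n) Σ_{i<n} h(δ(X_i,Z))` satisfies `δ(M_n, M) → 0` almost surely. -/
theorem frechet_mean_strongly_consistent_unique_case
    (P : Type*) [MetricSpace P] [CompactSpace P] [Nonempty P]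
    [MeasurableSpace P] [BorelSpace P]
    (h : ℝ → ℝ) (hh : Continuous h) (hh0 : ∀ x, 0 ≤ x → 0 ≤ h x)
    (Q : Measure P) [IsProbabilityMeasure Q]
    (Ω : Type*) [MeasurableSpace Ω] (μ : Measure Ω) [IsProbabilityMeasure μ]
    (X : ℕ → Ω → P) (hmeas : ∀ i, Measurable (X i))
    (hindep : ProbabilityTheory.iIndepFun X μ)
    (hlaw : ∀ i, μ.map (X i) = Q)
    (M : P)
    (hM : ∀ Z : P, (∫ x, h (dist x M) ∂Q) ≤ ∫ x, h (dist x Z) ∂Q)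
    (hMuniq : ∀ M' : P, (∀ Z : P, (∫ x, h (dist x M') ∂Q) ≤ ∫ x, h (dist x Z) ∂Q) → M' = M)
    (Mn : ℕ → Ω → P)
    (hMn : ∀ n ω, ∀ Z : P,
      (∑ i ∈ Finset.range n, h (dist (X i ω) (Mn n ω))) / n
        ≤ (∑ i ∈ Finset.range n, h (dist (X i ω) Z)) / n) :
    ∀ᵐ ω ∂μ, Tendsto (fun n : ℕ => dist (Mn n ω) M) atTop (nhds 0) :=
  frechet_mean_strongly_consistent_unique_case_general P h hh Q Ω μ X hmeas hindep hlaw M hMuniq Mn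
    hMn
end

section
/- The map f sending a partition matrix X ∈ [0,1]^{ℓ×m} (with columns summing to 1) to the ℓ×ℓ attributed-graph matrix G_X whose diagonal entries are the rows of X (G_X(k,k) = x_{k:} ∈ ℝ^m) and off-diagonal entries are zero vectors, satisfies min_{P ∈ Π} ‖X − PY‖₂ = min_{P ∈ Π} ‖G_X − P G_Y Pᵀ‖₂ for all X, Y, i.e., f induces an isometric embedding of (P_{ℓ,m}, δ₂) into the graph edit kernel space. -/
open Finset

/-- Frobenius norm of an `ℓ×ℓ` matrix with attributes in `ℝ^m`. -/
noncomputable def frobNormG {ℓ m : ℕ} (A : Matrix (Fin ℓ) (Fin ℓ) (Fin m → ℝ)) : ℝ :=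
  Real.sqrt (∑ i, ∑ j, ∑ k, (A i j k) ^ 2)

/-- Conjugation `P G Pᵀ` of an attributed-graph matrix by the permutation matrix of `σ`. -/
def conjAct {ℓ m : ℕ} (σ : Equiv.Perm (Fin ℓ)) (G : Matrix (Fin ℓ) (Fin ℓ) (Fin m → ℝ)) :
    Matrix (Fin ℓ) (Fin ℓ) (Fin m → ℝ) := fun i j => G (σ i) (σ j)

/-- The attributed-graph matrix `G_X` of a partition matrix `X`: diagonal entries are
the rows of `X`, off-diagonal entries are zero vectors. -/
def graphOf {ℓ m : ℕ} (X : Matrix (Fin ℓ) (Fin m) ℝ) :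
    Matrix (Fin ℓ) (Fin ℓ) (Fin m → ℝ) :=
  fun i j => if i = j then (fun k => X i k) else 0

section

variable {ℓ m : ℕ}

theorem conjAct_graphOf (σ : Equiv.Perm (Fin ℓ)) (X : Matrix (Fin ℓ) (Fin m) ℝ) :
    conjAct σ (graphOf X) = graphOf (permAct σ X) := by
  ext i j k
  by_cases h : i = j <;> simp [conjAct, graphOf, permAct, h]

theorem graphOf_sub (X Y : Matrix (Fin ℓ) (Fin m) ℝ) :
    graphOf X - graphOf Y = graphOf (X - Y) := by
  ext i j k
  simp only [graphOf, Matrix.sub_apply]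
  split_ifs <;> simp

theorem frobNormG_graphOf (X : Matrix (Fin ℓ) (Fin m) ℝ) :
    frobNormG (graphOf X) = frobNorm X := by
  unfold frobNormG frobNorm graphOf
  congr 1
  refine Finset.sum_congr rfl fun i _ => ?_
  simp [apply_ite (fun v : Fin m → ℝ => ∑ k, v k ^ 2)]

end

theorem partition_graph_isometric_embedding_general {ℓ m : ℕ}
    (X Y : Matrix (Fin ℓ) (Fin m) ℝ) :
    Finset.univ.inf' Finset.univ_nonempty
        (fun σ : Equiv.Perm (Fin ℓ) => frobNorm (X - permAct σ Y))
      = Finset.univ.inf' Finset.univ_nonempty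
        (fun σ : Equiv.Perm (Fin ℓ) => frobNormG (graphOf X - conjAct σ (graphOf Y))) :=
  Finset.inf'_congr _ rfl fun σ _ => by
    rw [conjAct_graphOf, graphOf_sub, frobNormG_graphOf]

/-- the map `X ↦ G_X` satisfies
`min_{P∈Π} ‖X − PY‖₂ = min_{P∈Π} ‖G_X − P G_Y Pᵀ‖₂` for all partition matrices `X, Y`,
i.e., it induces an isometric embedding of `(P_{ℓ,m}, δ₂)` into the graph edit kernel
space `(G_{ℓ,m}, δ_g)`. -/
theorem partition_graph_isometric_embedding {ℓ m : ℕ}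
    (X Y : Matrix (Fin ℓ) (Fin m) ℝ)
    (hX01 : ∀ i j, X i j ∈ Set.Icc (0 : ℝ) 1) (hXcol : ∀ j, ∑ i, X i j = 1)
    (hY01 : ∀ i j, Y i j ∈ Set.Icc (0 : ℝ) 1) (hYcol : ∀ j, ∑ i, Y i j = 1) :
    Finset.univ.inf' Finset.univ_nonempty
        (fun σ : Equiv.Perm (Fin ℓ) => frobNorm (X - permAct σ Y))
      = Finset.univ.inf' Finset.univ_nonempty
        (fun σ : Equiv.Perm (Fin ℓ) => frobNormG (graphOf X - conjAct σ (graphOf Y))) :=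
  partition_graph_isometric_embedding_general X Y
end
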